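/- A covariate that determines the principal stratum identifies the survivor average causal effect: let X : Ω → 𝒳 be a measurable covariate and A ⊆ 𝒳 a measurable set such that LL = {X ∈ A} (up to null sets). If 0 < P(Z = T) < 1, Z is independent of (X, S_T, S_C, Y_T, Y_C), Y_T and Y_C are integrable, and P(X ∈ A) > 0, then E[Y_T − Y_C | LL] = E[Y^obs | Z = T, X ∈ A] − E[Y^obs | Z = C, X ∈ A]. -/

import Mathlib

/-!
Within the stratum `LL = {X ∈ A}` the survivor average causal effect is
`E[Y_T | X ∈ A] - E[Y_C | X ∈ A]`. Since `Z` is independent of `(X, Y_T)`, the event `{Z = T}`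
splits off the set integral `∫_{Z = T, X ∈ A} Y_T = P(Z = T) ∫_{X ∈ A} Y_T`, so additionally
conditioning on `Z = T` does not change the conditional mean of `Y_T`; on `{Z = T}` the observed
outcome is `Y_T`. The control arm is symmetric, using `P(Z = C) = 1 - P(Z = T) > 0`.
-/

open MeasureTheory ProbabilityTheory

namespace ProbabilityTheory

variable {Ω β 𝒳 : Type*} [MeasurableSpace Ω] [MeasurableSpace β] [MeasurableSpace 𝒳]
  {μ : Measure Ω}

lemma cond_congr_ae {s t : Set Ω} (hst : s =ᵐ[μ] t) : μ[|s] = μ[|t] := by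
  rw [cond, cond, measure_congr hst, Measure.restrict_congr_set hst]

lemma integral_cond_eq_inv_mul_setIntegral (s : Set Ω) (f : Ω → ℝ) :
    ∫ ω, f ω ∂μ[|s] = (μ.real s)⁻¹ * ∫ ω in s, f ω ∂μ := by
  rw [cond, integral_smul_measure, smul_eq_mul, ENNReal.toReal_inv]
  rfl

lemma integral_cond_sub {s : Set Ω} {f g : Ω → ℝ} (hf : Integrable f μ) (hg : Integrable g μ) :
    ∫ ω, (f ω - g ω) ∂μ[|s] = ∫ ω, f ω ∂μ[|s] - ∫ ω, g ω ∂μ[|s] := by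
  simp only [integral_cond_eq_inv_mul_setIntegral, integral_sub hf.integrableOn hg.integrableOn,
    mul_sub]

lemma setIntegral_preimage_eq_mul_of_indepFun {Z : Ω → β} {g : Ω → ℝ} (hZ : Measurable Z)
    (hg : AEMeasurable g μ) (hind : IndepFun Z g μ) {B : Set β} (hB : MeasurableSet B) :
    ∫ ω in Z ⁻¹' B, g ω ∂μ = μ.real (Z ⁻¹' B) * ∫ ω, g ω ∂μ :=
  ((IndepFun_iff_Indep _ _ _).1 hind).setIntegral_eq_mul hZ.comap_le hg ⟨B, hB, rfl⟩
    aestronglyMeasurable_id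

lemma integral_cond_preimage_inter_of_indepFun [IsFiniteMeasure μ] {Z : Ω → β} {X : Ω → 𝒳}
    {f : Ω → ℝ} (hZ : Measurable Z) (hX : Measurable X) (hf : AEStronglyMeasurable f μ)
    (hind : IndepFun Z (fun ω => (X ω, f ω)) μ) {B : Set β} (hB : MeasurableSet B)
    (hB0 : μ (Z ⁻¹' B) ≠ 0) {A : Set 𝒳} (hA : MeasurableSet A) :
    ∫ ω, f ω ∂μ[|Z ⁻¹' B ∩ X ⁻¹' A] = ∫ ω, f ω ∂μ[|X ⁻¹' A] := by
  have hXA : MeasurableSet (X ⁻¹' A) := hX hA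
  have hindX : IndepFun Z X μ := hind.comp measurable_id measurable_fst
  have hindf : IndepFun Z ((X ⁻¹' A).indicator f) μ := by
    have hcomp : (X ⁻¹' A).indicator f =
        (fun p : 𝒳 × ℝ => A.indicator 1 p.1 * p.2) ∘ fun ω => (X ω, f ω) := by
      ext ω
      by_cases hω : X ω ∈ A <;> simp [hω]
    rw [hcomp]
    exact hind.comp measurable_id
      (((measurable_one.indicator hA).comp measurable_fst).mul measurable_snd)
  have hmeas : μ.real (Z ⁻¹' B ∩ X ⁻¹' A) = μ.real (Z ⁻¹' B) * μ.real (X ⁻¹' A) := by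
    simp only [Measure.real, hindX.measure_inter_preimage_eq_mul _ _ hB hA,
      ENNReal.toReal_mul]
  have hint : ∫ ω in Z ⁻¹' B ∩ X ⁻¹' A, f ω ∂μ =
      μ.real (Z ⁻¹' B) * ∫ ω in X ⁻¹' A, f ω ∂μ := by
    rw [← setIntegral_indicator hXA, ← integral_indicator hXA,
      setIntegral_preimage_eq_mul_of_indepFun hZ (hf.indicator hXA).aemeasurable hindf hB]
  have hB0' : μ.real (Z ⁻¹' B) ≠ 0 := (measureReal_ne_zero_iff).2 hB0
  rw [integral_cond_eq_inv_mul_setIntegral, integral_cond_eq_inv_mul_setIntegral, hmeas, hint,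
    mul_comm (μ.real _), mul_inv, mul_assoc, inv_mul_cancel_left₀ hB0']

end ProbabilityTheory

theorem covariate_identifies_SACE_general
    {Ω 𝒳 : Type*} [MeasurableSpace Ω] [MeasurableSpace 𝒳]
    (μ : Measure Ω) [IsProbabilityMeasure μ]
    (Z S_T S_C : Ω → Bool) (Y_T Y_C : Ω → ℝ) (X : Ω → 𝒳) (A : Set 𝒳)
    (hZ : Measurable Z)
    (hX : Measurable X) (hA : MeasurableSet A)
    (hLLX : {ω | S_T ω = true ∧ S_C ω = true} =ᵐ[μ] {ω | X ω ∈ A})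
    (hpos : 0 < μ {ω | Z ω = true}) (hlt : μ {ω | Z ω = true} < 1)
    (hindep : IndepFun Z (fun ω => (X ω, S_T ω, S_C ω, Y_T ω, Y_C ω)) μ)
    (hintT : Integrable Y_T μ) (hintC : Integrable Y_C μ) :
    (∫ ω, (Y_T ω - Y_C ω) ∂μ[|{ω | S_T ω = true ∧ S_C ω = true}]) =
      (∫ ω, (if Z ω then Y_T ω else Y_C ω) ∂μ[|{ω | Z ω = true ∧ X ω ∈ A}])
        - ∫ ω, (if Z ω then Y_T ω else Y_C ω) ∂μ[|{ω | Z ω = false ∧ X ω ∈ A}] := by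
  have hZfalse : 0 < μ {ω | Z ω = false} := by
    have hcompl : {ω | Z ω = false} = {ω | Z ω = true}ᶜ := by ext; simp
    rw [hcompl, prob_compl_eq_one_sub (s := {ω | Z ω = true}) (hZ (measurableSet_singleton _))]
    exact tsub_pos_of_lt hlt
  have hindT : IndepFun Z (fun ω => (X ω, Y_T ω)) μ :=
    hindep.comp (ψ := fun p : 𝒳 × Bool × Bool × ℝ × ℝ => (p.1, p.2.2.2.1)) measurable_id
      (by fun_prop)
  have hindC : IndepFun Z (fun ω => (X ω, Y_C ω)) μ :=
    hindep.comp (ψ := fun p : 𝒳 × Bool × Bool × ℝ × ℝ => (p.1, p.2.2.2.2)) measurable_id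
      (by fun_prop)
  have hobserved (b : Bool) (Y : Ω → ℝ)
      (hY : ∀ ω, Z ω = b → (if Z ω then Y_T ω else Y_C ω) = Y ω)
      (hYm : AEStronglyMeasurable Y μ) (hind : IndepFun Z (fun ω => (X ω, Y ω)) μ)
      (hb : 0 < μ {ω | Z ω = b}) :
      ∫ ω, (if Z ω then Y_T ω else Y_C ω) ∂μ[|{ω | Z ω = b ∧ X ω ∈ A}] =
        ∫ ω, Y ω ∂μ[|{ω | X ω ∈ A}] := by
    have hs : MeasurableSet {ω | Z ω = b ∧ X ω ∈ A} :=
      (hZ (measurableSet_singleton b)).inter (hX hA)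
    rw [integral_congr_ae (ae_cond_of_forall_mem hs fun ω hω => hY ω hω.1)]
    exact integral_cond_preimage_inter_of_indepFun hZ hX hYm hind (measurableSet_singleton b)
      hb.ne' hA
  rw [cond_congr_ae hLLX, integral_cond_sub hintT hintC,
    hobserved true Y_T (fun ω h => by simp [h]) hintT.aestronglyMeasurable hindT hpos,
    hobserved false Y_C (fun ω h => by simp [h]) hintC.aestronglyMeasurable hindC hZfalse]

/-- A covariate that determines the `LL` principal stratum identifies the survivor average
causal effect: if `LL = {X ∈ A}` up to null sets, then
`E[Y_T − Y_C | LL] = E[Y^obs | Z = T, X ∈ A] − E[Y^obs | Z = C, X ∈ A]`. -/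
theorem covariate_identifies_SACE
    {Ω 𝒳 : Type*} [MeasurableSpace Ω] [MeasurableSpace 𝒳]
    (μ : Measure Ω) [IsProbabilityMeasure μ]
    (Z S_T S_C : Ω → Bool) (Y_T Y_C : Ω → ℝ) (X : Ω → 𝒳) (A : Set 𝒳)
    (hZ : Measurable Z) (hST : Measurable S_T) (hSC : Measurable S_C)
    (hYT : Measurable Y_T) (hYC : Measurable Y_C)
    (hX : Measurable X) (hA : MeasurableSet A)
    (hLLX : {ω | S_T ω = true ∧ S_C ω = true} =ᵐ[μ] {ω | X ω ∈ A})
    (hpos : 0 < μ {ω | Z ω = true}) (hlt : μ {ω | Z ω = true} < 1)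
    (hindep : IndepFun Z (fun ω => (X ω, S_T ω, S_C ω, Y_T ω, Y_C ω)) μ)
    (hintT : Integrable Y_T μ) (hintC : Integrable Y_C μ)
    (hApos : 0 < μ {ω | X ω ∈ A}) :
    (∫ ω, (Y_T ω - Y_C ω) ∂μ[|{ω | S_T ω = true ∧ S_C ω = true}]) =
      (∫ ω, (if Z ω then Y_T ω else Y_C ω) ∂μ[|{ω | Z ω = true ∧ X ω ∈ A}])
        - ∫ ω, (if Z ω then Y_T ω else Y_C ω) ∂μ[|{ω | Z ω = false ∧ X ω ∈ A}] :=
  covariate_identifies_SACE_general μ Z S_T S_C Y_T Y_C X A hZ hX hA hLLX hpos hlt hindep hintT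
    hintC
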